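/- arXiv:2605.25132 — 3 statements merged into one kernel-verified Lean document; each statement's English description precedes it below -/
import Mathlib

section
/- With M as above and e⁽⁰⁾ = (w,x,y,z) a probability vector, the first component of M^{N−1} e⁽⁰⁾ equals (1/4)(1 + λ₁^N + λ₂^N + λ₃^N), where λ₁ = w + x − y − z, λ₂ = w − x + y − z, λ₃ = w − x − y + z. -/
/-- The swap transformation matrix with rows `(w,x,y,z), (x,w,z,y), (y,z,w,x), (z,y,x,w)`. -/
def swapMatrix (w x y z : ℝ) : Matrix (Fin 4) (Fin 4) ℝ :=
  !![w, x, y, z; x, w, z, y; y, z, w, x; z, y, x, w]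

/-!
`M = swapMatrix w x y z` is the convolution matrix of `w δ₀ + x δ₁ + y δ₂ + z δ₃` on the Klein
four-group, so it is diagonalised by the character table `H` of that group, a symmetric
Hadamard matrix with `H * H = 4`. The eigenvalues are `w + x + y + z = 1` and `λ₁, λ₂, λ₃`,
whence `4 M ^ n = H * diag(1, λ₁ ^ n, λ₂ ^ n, λ₃ ^ n) * H`. As `(w, x, y, z)` is the first column
of `M`, the claim is about the corner entry of `M ^ N`, and `H` has ones in its first row and
column.
-/

open Matrix

def kleinHadamard (R : Type*) [Ring R] : Matrix (Fin 4) (Fin 4) R :=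
  !![1, 1, 1, 1; 1, 1, -1, -1; 1, -1, 1, -1; 1, -1, -1, 1]

theorem kleinHadamard_mul_self {R : Type*} [Ring R] :
    kleinHadamard R * kleinHadamard R = (4 : R) • 1 := by
  ext i j
  fin_cases i <;> fin_cases j <;>
    simp [kleinHadamard, Matrix.mul_apply, Fin.sum_univ_four] <;> norm_num

def swapMatrixEigenvalues (w x y z : ℝ) : Fin 4 → ℝ :=
  ![w + x + y + z, w + x - y - z, w - x + y - z, w - x - y + z]

theorem swapMatrix_mul_kleinHadamard (w x y z : ℝ) :
    swapMatrix w x y z * kleinHadamard ℝ =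
      kleinHadamard ℝ * diagonal (swapMatrixEigenvalues w x y z) := by
  ext i j
  fin_cases i <;> fin_cases j <;>
    simp [swapMatrix, kleinHadamard, swapMatrixEigenvalues, Matrix.mul_apply,
      Fin.sum_univ_four] <;> ring

theorem four_smul_swapMatrix_pow (w x y z : ℝ) (n : ℕ) :
    (4 : ℝ) • swapMatrix w x y z ^ n =
      kleinHadamard ℝ * diagonal (swapMatrixEigenvalues w x y z ^ n) * kleinHadamard ℝ := by
  have hconj : SemiconjBy (kleinHadamard ℝ) (diagonal (swapMatrixEigenvalues w x y z) ^ n)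
      (swapMatrix w x y z ^ n) :=
    SemiconjBy.pow_right (swapMatrix_mul_kleinHadamard w x y z).symm n
  rw [← diagonal_pow, hconj.eq, Matrix.mul_assoc, kleinHadamard_mul_self, mul_smul_comm,
    mul_one]

theorem kleinHadamard_mul_diagonal_mul_kleinHadamard_apply_zero_zero {R : Type*} [Ring R]
    (d : Fin 4 → R) :
    (kleinHadamard R * diagonal d * kleinHadamard R) 0 0 = d 0 + d 1 + d 2 + d 3 := by
  simp [kleinHadamard, Matrix.mul_apply, vecMul_diagonal, Fin.sum_univ_four]

theorem swapMatrix_pow_apply_zero_zero (w x y z : ℝ) (n : ℕ) :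
    (swapMatrix w x y z ^ n) 0 0 =
      ((w + x + y + z) ^ n + (w + x - y - z) ^ n + (w - x + y - z) ^ n + (w - x - y + z) ^ n)
        / 4 := by
  rw [eq_div_iff four_ne_zero, mul_comm, ← smul_eq_mul, ← Matrix.smul_apply,
    four_smul_swapMatrix_pow, kleinHadamard_mul_diagonal_mul_kleinHadamard_apply_zero_zero]
  rfl

theorem swapMatrix_mulVec_single_zero (w x y z : ℝ) :
    swapMatrix w x y z *ᵥ Pi.single 0 1 = ![w, x, y, z] := by
  ext i
  fin_cases i <;> simp [swapMatrix]

theorem swapMatrix_pow_apply_zero_general (w x y z : ℝ)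
    (hsum : w + x + y + z = 1)
    (N : ℕ) (hN : 1 ≤ N) :
    ((swapMatrix w x y z ^ (N - 1)).mulVec ![w, x, y, z]) 0 =
      (1 + (w + x - y - z) ^ N + (w - x + y - z) ^ N + (w - x - y + z) ^ N) / 4 := by
  rw [← swapMatrix_mulVec_single_zero, mulVec_mulVec, ← pow_succ, Nat.sub_add_cancel hN,
    mulVec_single_one, col_apply, swapMatrix_pow_apply_zero_zero, hsum, one_pow]

/-- For a probability vector `e⁰ = (w,x,y,z)`, the first component of `M^{N−1} e⁰` equals
`(1 + λ₁^N + λ₂^N + λ₃^N)/4` where `λ₁ = w+x−y−z`, `λ₂ = w−x+y−z`, `λ₃ = w−x−y+z`.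
This is the fidelity after `N−1` entanglement swaps on a chain of `N` identical links. -/
theorem swapMatrix_pow_apply_zero (w x y z : ℝ)
    (hw : 0 ≤ w) (hx : 0 ≤ x) (hy : 0 ≤ y) (hz : 0 ≤ z) (hsum : w + x + y + z = 1)
    (N : ℕ) (hN : 1 ≤ N) :
    ((swapMatrix w x y z ^ (N - 1)).mulVec ![w, x, y, z]) 0 =
      (1 + (w + x - y - z) ^ N + (w - x + y - z) ^ N + (w - x - y + z) ^ N) / 4 :=
  swapMatrix_pow_apply_zero_general w x y z hsum N hN
end

section
/- Let H_C be a diagonal N×N real matrix with diagonal entries C(z), and let H_G = I − |ψ₀⟩⟨ψ₀| where |ψ₀⟩ is the uniform superposition vector with all entries 1/√N. Then the spectral norm of the commutator [H_C, H_G] equals the standard deviation σ_C = sqrt( (1/N) Σ_z (C(z) − C_avg)² ) of the diagonal values, where C_avg = (1/N) Σ_z C(z). -/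
/-!
The all-`1/N` matrix is the projection `|ψ₀⟩⟨ψ₀|`, so for the self-adjoint `H_C` the commutator
`[H_C, I - |ψ₀⟩⟨ψ₀|]` is `|ψ₀⟩⟨v| - |v⟩⟨ψ₀|` with `v = H_C ψ₀`. This operator does not change when
`v` is replaced by its component `w = v - ⟨ψ₀, v⟩ ψ₀` orthogonal to `ψ₀`; it then sends `x` to
`⟨w, x⟩ ψ₀ - ⟨ψ₀, x⟩ w`, whose norm is at most `‖w‖ ‖x‖` (split `x` along `ψ₀` and use Pythagoras
and Cauchy–Schwarz), with equality at `x = ψ₀`. Finally `w` has coordinates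
`(C(z) - C_avg) / √N`, so `‖w‖ = σ_C`.
-/

open InnerProductSpace

section RankOneCommutator

variable {E : Type*} [NormedAddCommGroup E] [InnerProductSpace ℝ E]

theorem norm_inner_smul_sub_inner_smul_le {u w : E} (hu : ‖u‖ = 1) (huw : ⟪u, w⟫_ℝ = 0)
    (x : E) : ‖⟪w, x⟫_ℝ • u - ⟪u, x⟫_ℝ • w‖ ≤ ‖w‖ * ‖x‖ := by
  set y := x - ⟪u, x⟫_ℝ • u
  have hx : x = ⟪u, x⟫_ℝ • u + y := by simp [y]
  have huy : ⟪u, y⟫_ℝ = 0 := by simp [y, inner_sub_right, inner_smul_right, hu]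
  have hwx : ⟪w, x⟫_ℝ = ⟪w, y⟫_ℝ := by
    rw [hx, inner_add_right, inner_smul_right, real_inner_comm u w, huw, mul_zero, zero_add]
  have hnorm_x : ‖x‖ ^ 2 = ⟪u, x⟫_ℝ ^ 2 + ‖y‖ ^ 2 := by
    conv_lhs => rw [hx]
    rw [norm_add_sq_real, inner_smul_left, huy, norm_smul, hu]
    simp
  have hnorm : ‖⟪w, x⟫_ℝ • u - ⟪u, x⟫_ℝ • w‖ ^ 2 = ⟪w, y⟫_ℝ ^ 2 + ⟪u, x⟫_ℝ ^ 2 * ‖w‖ ^ 2 := by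
    rw [norm_sub_sq_real, inner_smul_left, inner_smul_right, huw, norm_smul, norm_smul, hu, hwx]
    simp [mul_pow]
  have hCS : ⟪w, y⟫_ℝ ^ 2 ≤ ‖w‖ ^ 2 * ‖y‖ ^ 2 := by
    rw [← mul_pow]
    exact sq_le_sq' (neg_le_of_abs_le (abs_real_inner_le_norm w y)) (real_inner_le_norm w y)
  refine le_of_sq_le_sq ?_ (by positivity)
  rw [hnorm, mul_pow, hnorm_x]
  nlinarith [hCS]

theorem norm_rankOne_sub_rankOne_of_inner_eq_zero {u w : E} (hu : ‖u‖ = 1)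
    (huw : ⟪u, w⟫_ℝ = 0) : ‖rankOne ℝ u w - rankOne ℝ w u‖ = ‖w‖ := by
  refine le_antisymm (ContinuousLinearMap.opNorm_le_bound _ (norm_nonneg w) fun x => ?_) ?_
  · simpa using norm_inner_smul_sub_inner_smul_le hu huw x
  · have hu_image : (rankOne ℝ u w - rankOne ℝ w u) u = -w := by
      simp [real_inner_comm, huw, hu]
    simpa [hu_image, hu] using (rankOne ℝ u w - rankOne ℝ w u).le_opNorm u

theorem norm_rankOne_sub_rankOne {u : E} (hu : ‖u‖ = 1) (v : E) :
    ‖rankOne ℝ u v - rankOne ℝ v u‖ = ‖v - ⟪u, v⟫_ℝ • u‖ := by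
  have huw : ⟪u, v - ⟪u, v⟫_ℝ • u⟫_ℝ = 0 := by
    simp [inner_sub_right, inner_smul_right, hu]
  rw [← norm_rankOne_sub_rankOne_of_inner_eq_zero hu huw]
  simp [map_sub, map_smul]

end RankOneCommutator

theorem commutator_one_sub_rankOne_self {𝕜 E : Type*} [RCLike 𝕜] [NormedAddCommGroup E]
    [InnerProductSpace 𝕜 E] [CompleteSpace E] {T : E →L[𝕜] E} (hT : IsSelfAdjoint T) (p : E) :
    T * (1 - rankOne 𝕜 p p) - (1 - rankOne 𝕜 p p) * T = rankOne 𝕜 p (T p) - rankOne 𝕜 (T p) p := by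
  rw [mul_sub, sub_mul, mul_one, one_mul, ContinuousLinearMap.mul_def, ContinuousLinearMap.mul_def,
    comp_rankOne, rankOne_comp, hT.adjoint_eq]
  abel

theorem inv_sqrt_mul_inv_sqrt {x : ℝ} (hx : 0 ≤ x) : (√x)⁻¹ * (√x)⁻¹ = x⁻¹ := by
  rw [← mul_inv, Real.mul_self_sqrt hx]

section UniformState

variable (ι : Type*) [Fintype ι]

noncomputable def uniformState : EuclideanSpace ℝ ι :=
  WithLp.toLp 2 fun _ => (√(Fintype.card ι))⁻¹

variable {ι}

@[simp] theorem uniformState_apply (i : ι) : uniformState ι i = (√(Fintype.card ι))⁻¹ := rfl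

theorem norm_uniformState [Nonempty ι] : ‖uniformState ι‖ = 1 := by
  simp [EuclideanSpace.norm_eq]

theorem inner_uniformState (x : EuclideanSpace ℝ ι) :
    ⟪uniformState ι, x⟫_ℝ = ∑ i, (√(Fintype.card ι))⁻¹ * x i := by
  simp [PiLp.inner_apply, mul_comm]

variable [DecidableEq ι]

theorem toEuclideanCLM_of_const_inv_card :
    Matrix.toEuclideanCLM (𝕜 := ℝ) (Matrix.of fun _ _ : ι => ((Fintype.card ι : ℝ))⁻¹) =
      rankOne ℝ (uniformState ι) (uniformState ι) := by
  ext x i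
  simp only [Matrix.ofLp_toEuclideanCLM, rankOne_apply, inner_uniformState, Matrix.mulVec,
    dotProduct, Matrix.of_apply, PiLp.smul_apply, uniformState_apply, smul_eq_mul, Finset.sum_mul]
  refine Finset.sum_congr rfl fun j _ => ?_
  rw [mul_right_comm, inv_sqrt_mul_inv_sqrt (Nat.cast_nonneg _)]

theorem norm_diagonal_uniformState_sub_inner_smul (C : ι → ℝ) :
    ‖Matrix.toEuclideanCLM (𝕜 := ℝ) (Matrix.diagonal C) (uniformState ι) -
        ⟪uniformState ι, Matrix.toEuclideanCLM (𝕜 := ℝ) (Matrix.diagonal C) (uniformState ι)⟫_ℝ •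
          uniformState ι‖ =
      √((∑ z, (C z - (∑ z, C z) / Fintype.card ι) ^ 2) / Fintype.card ι) := by
  have hc : (√(Fintype.card ι))⁻¹ ^ 2 = (Fintype.card ι : ℝ)⁻¹ := by
    rw [sq, inv_sqrt_mul_inv_sqrt (Nat.cast_nonneg _)]
  have hmean : ⟪uniformState ι, Matrix.toEuclideanCLM (𝕜 := ℝ) (Matrix.diagonal C)
      (uniformState ι)⟫_ℝ = (∑ z, C z) / Fintype.card ι := by
    simp only [inner_uniformState, Matrix.ofLp_toEuclideanCLM, Matrix.mulVec_diagonal,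
      uniformState_apply, Finset.sum_div]
    refine Finset.sum_congr rfl fun i _ => ?_
    rw [mul_left_comm, inv_sqrt_mul_inv_sqrt (Nat.cast_nonneg _), div_eq_mul_inv]
  rw [EuclideanSpace.norm_eq, hmean]
  congr 1
  rw [Finset.sum_div _ fun z => (C z - (∑ z, C z) / Fintype.card ι) ^ 2]
  refine Finset.sum_congr rfl fun i _ => ?_
  simp only [PiLp.sub_apply, PiLp.smul_apply, Matrix.ofLp_toEuclideanCLM, Matrix.mulVec_diagonal,
    uniformState_apply, Real.norm_eq_abs, sq_abs, smul_eq_mul]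
  rw [← sub_mul, mul_pow, hc, ← div_eq_mul_inv]

end UniformState

/-- For `H_C = diag(C)` and the Grover Hamiltonian `H_G = I − |ψ₀⟩⟨ψ₀|` with `|ψ₀⟩` the uniform
superposition (so `|ψ₀⟩⟨ψ₀|` has all entries `1/N`), the spectral norm of the commutator
`[H_C, H_G]` equals the standard deviation `σ_C` of the diagonal values. -/
theorem commutator_norm_eq_stddev (N : ℕ) (hN : 0 < N) (C : Fin N → ℝ) :
    ‖(Matrix.toEuclideanCLM (𝕜 := ℝ) (n := Fin N)
        (Matrix.diagonal C * ((1 : Matrix (Fin N) (Fin N) ℝ) - Matrix.of fun _ _ => (N : ℝ)⁻¹) -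
         ((1 : Matrix (Fin N) (Fin N) ℝ) - Matrix.of fun _ _ => (N : ℝ)⁻¹) * Matrix.diagonal C))‖ =
      Real.sqrt ((∑ z, (C z - (∑ z, C z) / N) ^ 2) / N) := by
  have : Nonempty (Fin N) := ⟨⟨0, hN⟩⟩
  have hP := toEuclideanCLM_of_const_inv_card (ι := Fin N)
  rw [Fintype.card_fin] at hP
  have hD : IsSelfAdjoint (Matrix.toEuclideanCLM (𝕜 := ℝ) (Matrix.diagonal C)) :=
    (Matrix.isHermitian_diagonal C).isSelfAdjoint.map _
  rw [map_sub, map_mul, map_mul, map_sub, map_one, hP, commutator_one_sub_rankOne_self hD,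
    norm_rankOne_sub_rankOne norm_uniformState, norm_diagonal_uniformState_sub_inner_smul,
    Fintype.card_fin]
end

section
/- Let H₀, H₁ be Hermitian operators on a finite-dimensional Hilbert space and P₀ a Hermitian projector commuting with H₀. For any sequence of real angles β₁, γ₁, …, β_p, γ_p, let |ψ_p⟩ = e^{−iβ_p H₀} e^{−iγ_p H₁} ⋯ e^{−iβ₁ H₀} e^{−iγ₁ H₁} |ψ₀⟩ for a unit vector |ψ₀⟩. Then |⟨ψ_p|P₀|ψ_p⟩ − ⟨ψ₀|P₀|ψ₀⟩| ≤ (Σ_{j=1}^p |γ_j|) · ‖[P₀, H₁]‖. -/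
open Finset Matrix

/-- The QAOA state after `k` rounds:
`ψ_{k+1} = e^{−iβ_k H₀} e^{−iγ_k H₁} ψ_k`, starting from `ψ₀`. -/
noncomputable def qaoaState {n : Type*} [Fintype n] [DecidableEq n]
    (H0 H1 : Matrix n n ℂ) (β γ : ℕ → ℝ) (ψ0 : n → ℂ) : ℕ → n → ℂ
  | 0 => ψ0
  | k + 1 =>
      (NormedSpace.exp ((-(Complex.I * (β k : ℂ))) • H0) *
        NormedSpace.exp ((-(Complex.I * (γ k : ℂ))) • H1)).mulVec
        (qaoaState H0 H1 β γ ψ0 k)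

/-!
Conjugation by `exp (-iβ a₀)` fixes `q` when `q` commutes with `a₀`, while conjugation by
`exp (-iγ a₁)` moves `q` by at most `|γ| ‖q a₁ - a₁ q‖`: the path `s ↦ exp (isa₁) q exp (-isa₁)`
has derivative `exp (isa₁) i(a₁ q - q a₁) exp (-isa₁)`, whose norm is `‖q a₁ - a₁ q‖` because
the outer factors are unitary. Since the rounds also preserve `ψ* ψ`, each round changes
`ψ* P₀ ψ` by at most `|γ_j| ‖P₀ H₁ - H₁ P₀‖`, and these bounds add up along the rounds.
-/

open NormedSpace

section CStarAlgebra

variable {A : Type*} [CStarAlgebra A]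

theorem exp_real_smul_I_smul_mem_unitary {a : A} (ha : IsSelfAdjoint a) (t : ℝ) :
    exp (t • Complex.I • a) ∈ unitary A := by
  let +nondep : NormedAlgebra ℚ A := .restrictScalars ℚ ℂ A
  exact exp_mem_unitary_of_mem_skewAdjoint
    (skewAdjoint.smul_mem t (ha.smul_mem_skewAdjoint Complex.conj_I))

theorem exp_neg_real_smul_I_smul_mem_unitary {a : A} (ha : IsSelfAdjoint a) (t : ℝ) :
    exp (-(t • Complex.I • a)) ∈ unitary A := by
  simpa only [neg_smul] using exp_real_smul_I_smul_mem_unitary ha (-t)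

theorem star_exp_neg_real_smul_I_smul {a : A} (ha : IsSelfAdjoint a) (t : ℝ) :
    star (exp (-(t • Complex.I • a))) = exp (t • Complex.I • a) := by
  rw [star_exp, star_neg, star_smul, star_smul, ha.star_eq, Complex.star_def, Complex.conj_I,
    star_trivial, neg_smul, smul_neg, neg_neg]

theorem norm_exp_mul_mul_exp_neg_sub_le {a : A} (ha : IsSelfAdjoint a) (q : A) (t : ℝ) :
    ‖exp (t • Complex.I • a) * q * exp (-(t • Complex.I • a)) - q‖ ≤ |t| * ‖q * a - a * q‖ := by
  set x : A := Complex.I • a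
  have hu : ∀ s : ℝ, exp (s • x) ∈ unitary A := exp_real_smul_I_smul_mem_unitary ha
  have hu' : ∀ s : ℝ, exp (s • -x) ∈ unitary A := fun s => by
    simpa only [smul_neg] using exp_neg_real_smul_I_smul_mem_unitary ha s
  set g : ℝ → A := fun s => exp (s • x) * q * exp (s • -x)
  set c : A := x * q - q * x
  have hg : ∀ s : ℝ, HasDerivAt g (exp (s • x) * c * exp (s • -x)) s := fun s => by
    refine (((hasDerivAt_exp_smul_const x s).mul_const q).mul
      (hasDerivAt_exp_smul_const' (-x) s)).congr_deriv ?_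
    simp only [c]
    noncomm_ring
  have hbound : ∀ s : ℝ, ‖exp (s • x) * c * exp (s • -x)‖ ≤ ‖c‖ := fun s => by
    rw [CStarRing.norm_mul_mem_unitary _ (hu' s), CStarRing.norm_mem_unitary_mul _ (hu s)]
  have hc : ‖c‖ = ‖q * a - a * q‖ := by
    have : c = -(Complex.I • (q * a - a * q)) := by
      simp only [c, x, smul_mul_assoc, mul_smul_comm, smul_sub, neg_sub]
    rw [this, norm_neg, norm_smul, Complex.norm_I, one_mul]
  have := Convex.norm_image_sub_le_of_norm_hasDerivWithin_le (f := g)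
    (fun s _ => (hg s).hasDerivWithinAt) (fun s _ => hbound s) convex_univ
    (Set.mem_univ 0) (Set.mem_univ t)
  simpa [g, smul_neg, hc, mul_comm] using this

theorem norm_star_mul_mul_sub_le_of_commute {a₀ a₁ q : A} (ha₀ : IsSelfAdjoint a₀)
    (ha₁ : IsSelfAdjoint a₁) (hq : Commute q a₀) (β γ : ℝ) :
    ‖star (exp (-(β • Complex.I • a₀)) * exp (-(γ • Complex.I • a₁))) * q *
        (exp (-(β • Complex.I • a₀)) * exp (-(γ • Complex.I • a₁))) - q‖ ≤
      |γ| * ‖q * a₁ - a₁ * q‖ := by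
  set u := exp (-(β • Complex.I • a₀))
  have hu : star u * u = 1 :=
    Unitary.star_mul_self_of_mem (exp_neg_real_smul_I_smul_mem_unitary ha₀ β)
  have hqu : Commute q u := ((hq.smul_right _).smul_right _).neg_right.exp_right
  have hconj : star u * q * u = q := by
    rw [mul_assoc, hqu.eq, ← mul_assoc, hu, one_mul]
  set v := exp (-(γ • Complex.I • a₁))
  have hsplit : star (u * v) * q * (u * v) = star v * (star u * q * u) * v := by
    simp only [star_mul, mul_assoc]
  rw [hsplit, hconj, star_exp_neg_real_smul_I_smul ha₁]
  exact norm_exp_mul_mul_exp_neg_sub_le ha₁ q γ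

end CStarAlgebra

theorem Matrix.star_mulVec_dotProduct_mulVec {m n R : Type*} [Fintype m] [Fintype n]
    [CommSemiring R] [StarRing R] (U : Matrix m n R) (B : Matrix m m R) (ψ : n → R) :
    star (U *ᵥ ψ) ⬝ᵥ B *ᵥ (U *ᵥ ψ) = star ψ ⬝ᵥ (Uᴴ * B * U) *ᵥ ψ := by
  rw [star_mulVec, dotProduct_mulVec, dotProduct_mulVec, dotProduct_mulVec, vecMul_vecMul,
    vecMul_vecMul, Matrix.mul_assoc]

-- With this scope `‖M‖` is `‖toEuclideanCLM M‖` by definition, the norm of the statement.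
open scoped Matrix.Norms.L2Operator

theorem Matrix.norm_star_dotProduct_mulVec_le {n 𝕜 : Type*} [Fintype n] [DecidableEq n]
    [RCLike 𝕜] (B : Matrix n n 𝕜) (ψ : n → 𝕜) : ‖star ψ ⬝ᵥ B *ᵥ ψ‖ ≤ ‖B‖ * ‖star ψ ⬝ᵥ ψ‖ := by
  have hinner : ∀ φ : n → 𝕜, star ψ ⬝ᵥ φ = inner 𝕜 (WithLp.toLp 2 ψ) (WithLp.toLp 2 φ) :=
    fun φ => by rw [EuclideanSpace.inner_toLp_toLp, dotProduct_comm]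
  have hself : ‖star ψ ⬝ᵥ ψ‖ = ‖WithLp.toLp 2 ψ‖ ^ 2 := by
    rw [hinner, inner_self_eq_norm_sq_to_K, norm_pow, RCLike.norm_ofReal, abs_norm]
  calc ‖star ψ ⬝ᵥ B *ᵥ ψ‖ ≤ ‖WithLp.toLp 2 ψ‖ * ‖WithLp.toLp 2 (B *ᵥ ψ)‖ := by
        rw [hinner]; exact norm_inner_le_norm _ _
    _ ≤ ‖WithLp.toLp 2 ψ‖ * (‖B‖ * ‖WithLp.toLp 2 ψ‖) := by
        gcongr; exact B.l2_opNorm_mulVec (WithLp.toLp 2 ψ)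
    _ = ‖B‖ * ‖star ψ ⬝ᵥ ψ‖ := by rw [hself]; ring

section QAOA

variable {n : Type*} [Fintype n] [DecidableEq n] {H0 H1 : Matrix n n ℂ} {β γ : ℕ → ℝ}
  {ψ0 : n → ℂ}

theorem qaoaState_succ (k : ℕ) :
    qaoaState H0 H1 β γ ψ0 (k + 1) =
      (exp (-(β k • Complex.I • H0)) * exp (-(γ k • Complex.I • H1))) *ᵥ
        qaoaState H0 H1 β γ ψ0 k := by
  have hsmul : ∀ (t : ℝ) (H : Matrix n n ℂ), (-(Complex.I * t)) • H = -(t • Complex.I • H) :=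
    fun t H => by rw [neg_smul, ← Complex.coe_smul, smul_smul, mul_comm]
  rw [qaoaState, hsmul, hsmul]

theorem star_qaoaState_dotProduct_qaoaState (hH0 : H0.IsHermitian) (hH1 : H1.IsHermitian)
    (k : ℕ) : star (qaoaState H0 H1 β γ ψ0 k) ⬝ᵥ qaoaState H0 H1 β γ ψ0 k = star ψ0 ⬝ᵥ ψ0 := by
  induction k with
  | zero => rfl
  | succ k ih =>
    have hU := Unitary.star_mul_self_of_mem <| (unitary _).mul_mem
      (exp_neg_real_smul_I_smul_mem_unitary hH0.isSelfAdjoint (β k))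
      (exp_neg_real_smul_I_smul_mem_unitary hH1.isSelfAdjoint (γ k))
    have := star_mulVec_dotProduct_mulVec
      (exp (-(β k • Complex.I • H0)) * exp (-(γ k • Complex.I • H1))) 1 (qaoaState H0 H1 β γ ψ0 k)
    rw [Matrix.mul_one, ← star_eq_conjTranspose, hU, one_mulVec, one_mulVec] at this
    rw [qaoaState_succ, this, ih]

theorem norm_qaoa_expectation_succ_sub_le {P : Matrix n n ℂ} (hH0 : H0.IsHermitian)
    (hH1 : H1.IsHermitian) (hcomm : P * H0 = H0 * P) (k : ℕ) :
    ‖star (qaoaState H0 H1 β γ ψ0 (k + 1)) ⬝ᵥ P *ᵥ qaoaState H0 H1 β γ ψ0 (k + 1) -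
        star (qaoaState H0 H1 β γ ψ0 k) ⬝ᵥ P *ᵥ qaoaState H0 H1 β γ ψ0 k‖ ≤
      |γ k| * ‖P * H1 - H1 * P‖ * ‖star ψ0 ⬝ᵥ ψ0‖ := by
  rw [qaoaState_succ, star_mulVec_dotProduct_mulVec, ← dotProduct_sub, ← sub_mulVec,
    ← star_eq_conjTranspose]
  calc _ ≤ _ := norm_star_dotProduct_mulVec_le _ _
    _ ≤ _ := by
      rw [star_qaoaState_dotProduct_qaoaState hH0 hH1]
      gcongr
      exact norm_star_mul_mul_sub_le_of_commute hH0.isSelfAdjoint hH1.isSelfAdjoint hcomm _ _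

end QAOA

theorem qaoa_overlap_change_bound_general {n : Type*} [Fintype n] [DecidableEq n]
    (H0 H1 P0 : Matrix n n ℂ) (hH0 : H0.IsHermitian) (hH1 : H1.IsHermitian)
    (hcomm : P0 * H0 = H0 * P0)
    (β γ : ℕ → ℝ) (ψ0 : n → ℂ) (hψ0 : star ψ0 ⬝ᵥ ψ0 = 1) (p : ℕ) :
    ‖star (qaoaState H0 H1 β γ ψ0 p) ⬝ᵥ P0.mulVec (qaoaState H0 H1 β γ ψ0 p) -
        star ψ0 ⬝ᵥ P0.mulVec ψ0‖ ≤
      (∑ j ∈ Finset.range p, |γ j|) *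
        ‖(Matrix.toEuclideanCLM (𝕜 := ℂ) (n := n) (P0 * H1 - H1 * P0))‖ := by
  have := dist_le_range_sum_of_dist_le (f := fun k =>
      star (qaoaState H0 H1 β γ ψ0 k) ⬝ᵥ P0 *ᵥ qaoaState H0 H1 β γ ψ0 k)
    (d := fun j => |γ j| * ‖P0 * H1 - H1 * P0‖) p fun {k} _ => by
      have := norm_qaoa_expectation_succ_sub_le (β := β) (γ := γ) (ψ0 := ψ0) hH0 hH1 hcomm k
      rwa [hψ0, norm_one, mul_one, ← dist_eq_norm, dist_comm] at this
  rwa [dist_comm, dist_eq_norm, ← Finset.sum_mul] at this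

/-- QAOA overlap lemma: for Hermitian `H₀, H₁`, a Hermitian projector `P₀` commuting with `H₀`,
and a unit vector `ψ₀`, the expectation of `P₀` after `p` QAOA rounds changes by at most
`(Σ_{j} |γ_j|)·‖[P₀, H₁]‖`. -/
theorem qaoa_overlap_change_bound {n : Type*} [Fintype n] [DecidableEq n]
    (H0 H1 P0 : Matrix n n ℂ) (hH0 : H0.IsHermitian) (hH1 : H1.IsHermitian)
    (hP0 : P0.IsHermitian) (hproj : P0 * P0 = P0) (hcomm : P0 * H0 = H0 * P0)
    (β γ : ℕ → ℝ) (ψ0 : n → ℂ) (hψ0 : star ψ0 ⬝ᵥ ψ0 = 1) (p : ℕ) :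
    ‖star (qaoaState H0 H1 β γ ψ0 p) ⬝ᵥ P0.mulVec (qaoaState H0 H1 β γ ψ0 p) -
        star ψ0 ⬝ᵥ P0.mulVec ψ0‖ ≤
      (∑ j ∈ Finset.range p, |γ j|) *
        ‖(Matrix.toEuclideanCLM (𝕜 := ℂ) (n := n) (P0 * H1 - H1 * P0))‖ :=
  qaoa_overlap_change_bound_general H0 H1 P0 hH0 hH1 hcomm β γ ψ0 hψ0 p
end
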